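/- Let $A$ be an Archimedean $f$-algebra with separating order dual. For every $F \in (A^\sim)^\sim_n$ with $F \ge 0$ and $f, g \in A^\sim$, one has $F \cdot (|f| \wedge |g|) = (F \cdot |f|) \wedge (F \cdot |g|)$; consequently if $F \cdot f \perp F \cdot g$ for all $F \ge 0$ in $(A^\sim)^\sim_n$ and $A$ has the factorization property, then $f \perp g$. -/
import Mathlib


noncomputable section

/-- Riesz space (real vector lattice) axioms, as a `Prop`-valued class. -/
class RieszSp (E : Type*) [AddCommGroup E] [Lattice E] [Module ℝ E] : Prop where
  add_le_add_left : ∀ a b : E, a ≤ b → ∀ c : E, c + a ≤ c + b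
  smul_nonneg : ∀ (r : ℝ) (a : E), 0 ≤ r → 0 ≤ a → 0 ≤ r • a

/-- Archimedean (real) f-algebra axioms, as a `Prop`-valued class. -/
class FAlg (A : Type*) [CommRing A] [Lattice A] [Module ℝ A] extends RieszSp A : Prop where
  mul_nonneg : ∀ a b : A, 0 ≤ a → 0 ≤ b → 0 ≤ a * b
  disjoint_mul : ∀ a b c : A, a ⊓ b = 0 → 0 ≤ c → (c * a) ⊓ b = 0
  archimedean : ∀ a b : A, (∀ n : ℕ, (n : ℝ) • a ≤ b) → a ≤ 0

/-- A linear functional is order bounded if it is bounded on order intervals. -/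
def OrderBddFn {E : Type*} [AddCommGroup E] [Lattice E] [Module ℝ E]
    (φ : E →ₗ[ℝ] ℝ) : Prop :=
  ∀ a b : E, ∃ M : ℝ, ∀ x : E, a ≤ x → x ≤ b → |φ x| ≤ M

/-- A linear functional is order continuous if it sends downward directed sets with
infimum `0` to nets converging to `0`. -/
def OrdContFn {E : Type*} [AddCommGroup E] [Lattice E] [Module ℝ E]
    (φ : E →ₗ[ℝ] ℝ) : Prop :=
  ∀ s : Set E, s.Nonempty → DirectedOn (· ≥ ·) s → IsGLB s 0 →
    ∀ ε : ℝ, 0 < ε → ∃ d ∈ s, ∀ d' ∈ s, d' ≤ d → |φ d'| < ε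

/-- The data realizing `D` as the order dual `A^∼` of the f-algebra `A` (with separating
order dual) and `N` as the order continuous part `(A^∼)^∼_n` of the order bidual of `A`,
together with the Arens multiplication and its actions. -/
class DualSetting (A : Type*) [CommRing A] [Lattice A] [Module ℝ A]
    (D : Type*) [AddCommGroup D] [Lattice D] [Module ℝ D]
    (N : Type*) [CommRing N] [Lattice N] [Module ℝ N] where
  dual : D →ₗ[ℝ] A →ₗ[ℝ] ℝ
  bidual : N →ₗ[ℝ] D →ₗ[ℝ] ℝ
  dual_inj : Function.Injective dual
  bidual_inj : Function.Injective bidual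
  dual_bdd : ∀ d : D, OrderBddFn (dual d)
  dual_surj : ∀ φ : A →ₗ[ℝ] ℝ, OrderBddFn φ → ∃ d : D, dual d = φ
  dual_order : ∀ d : D, 0 ≤ d ↔ ∀ a : A, 0 ≤ a → 0 ≤ dual d a
  bidual_bdd : ∀ F : N, OrderBddFn (bidual F)
  bidual_cont : ∀ F : N, OrdContFn (bidual F)
  bidual_surj : ∀ Φ : D →ₗ[ℝ] ℝ, OrderBddFn Φ → OrdContFn Φ → ∃ F : N, bidual F = Φ
  bidual_order : ∀ F : N, 0 ≤ F ↔ ∀ d : D, 0 ≤ d → 0 ≤ bidual F d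
  separating : ∀ a : A, (∀ d : D, dual d a = 0) → a = 0
  /-- the action `f ⋅ a` of `A` on `A^∼`:  `(f ⋅ a)(b) = f (a b)` -/
  dsmul : A → D → D
  dsmul_eval : ∀ (a : A) (f : D) (b : A), dual (dsmul a f) b = dual f (a * b)
  /-- the action `F ⋅ f` of `(A^∼)^∼_n` on `A^∼`:  `(F ⋅ f)(a) = F (f ⋅ a)` -/
  nsmul : N → D → D
  nsmul_eval : ∀ (F : N) (f : D) (a : A), dual (nsmul F f) a = bidual F (dsmul a f)
  /-- the Arens product on `(A^∼)^∼_n`:  `(F * G)(f) = F (G ⋅ f)` -/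
  mul_eval : ∀ (F G : N) (f : D), bidual (F * G) f = bidual F (nsmul G f)

variable {A : Type*} [CommRing A] [Lattice A] [Module ℝ A] [FAlg A]
variable {D : Type*} [AddCommGroup D] [Lattice D] [Module ℝ D] [RieszSp D]
variable {N : Type*} [CommRing N] [Lattice N] [Module ℝ N] [FAlg N]
variable [P : DualSetting A D N]

open scoped Pointwise

/-! ### Auxiliary lattice-group lemmas -/

section AuxRiesz

variable {E : Type*} [AddCommGroup E] [Lattice E] [Module ℝ E] [RieszSp E]

instance (priority := 90) RieszSp.toCovariantLeft :
    CovariantClass E E (· + ·) (· ≤ ·) :=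
  ⟨fun c a b h => RieszSp.add_le_add_left a b h c⟩

instance (priority := 90) RieszSp.toCovariantRight :
    CovariantClass E E (Function.swap (· + ·)) (· ≤ ·) :=
  ⟨fun c a b h => by
    simpa [add_comm] using RieszSp.add_le_add_left a b h c⟩

lemma riesz_nsmul_nonneg {x : E} (hx : 0 ≤ x) (n : ℕ) : 0 ≤ n • x := by
  induction n with
  | zero => simp
  | succ k ih => rw [succ_nsmul]; exact add_nonneg ih hx

lemma riesz_inf_add_le {x y z : E} (hx : 0 ≤ x) (hy : 0 ≤ y) (hz : 0 ≤ z) :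
    (x + y) ⊓ z ≤ x ⊓ z + y ⊓ z := by
  have h1 : (x + y) ⊓ z ≤ x ⊓ z + y := by
    calc (x + y) ⊓ z ≤ (x + y) ⊓ (z + y) :=
          inf_le_inf_left _ (le_add_of_nonneg_right hy)
    _ = x ⊓ z + y := by rw [inf_add]
  have h2 : (x ⊓ z + y) ⊓ z ≤ x ⊓ z + y ⊓ z := by
    calc (x ⊓ z + y) ⊓ z ≤ (x ⊓ z + y) ⊓ (x ⊓ z + z) :=
          inf_le_inf_left _ (le_add_of_nonneg_left (le_inf hx hz))
    _ = x ⊓ z + y ⊓ z := by rw [← add_inf]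
  exact le_trans (le_inf h1 inf_le_right) h2

lemma riesz_nsmul_inf_eq_zero {u v : E} (h : u ⊓ v = 0) (n : ℕ) :
    (n • u) ⊓ v = 0 := by
  have hu : (0 : E) ≤ u := by rw [← h]; exact inf_le_left
  have hv : (0 : E) ≤ v := by rw [← h]; exact inf_le_right
  induction n with
  | zero => rw [zero_nsmul]; exact inf_eq_left.mpr hv
  | succ k ih =>
      refine le_antisymm ?_ (le_inf (riesz_nsmul_nonneg hu _) hv)
      rw [succ_nsmul]
      calc (k • u + u) ⊓ v ≤ (k • u) ⊓ v + u ⊓ v :=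
            riesz_inf_add_le (riesz_nsmul_nonneg hu k) hu hv
      _ = 0 := by rw [ih, h, add_zero]

lemma riesz_posPart_of_disj {p q : E} (hp : 0 ≤ p) (hq : 0 ≤ q) (h : p ⊓ q = 0) :
    (p - q)⁺ = p := by
  have h1 : p ⊔ q = p + q := by
    have h2 := inf_add_sup p q
    rw [h, zero_add] at h2
    exact h2
  have h3 : (p - q)⁺ = (p ⊔ q) - q := by
    rw [posPart_def, show (0 : E) = q - q from (sub_self q).symm, ← sup_sub]
  rw [h3, h1, add_sub_cancel_right]

lemma riesz_abs_of_disj {p q : E} (hp : 0 ≤ p) (hq : 0 ≤ q) (h : p ⊓ q = 0) :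
    |p - q| = p + q := by
  have h1 : (p - q)⁺ = p := riesz_posPart_of_disj hp hq h
  have h2 : (p - q)⁻ = q := by
    rw [negPart_def, neg_sub, ← posPart_def]
    exact riesz_posPart_of_disj hq hp (by rwa [inf_comm] at h)
  rw [← posPart_add_negPart (p - q), h1, h2]

end AuxRiesz

/-! ### Auxiliary f-algebra lemmas -/

section AuxFAlg

variable {R : Type*} [CommRing R] [Lattice R] [Module ℝ R] [FAlg R]

lemma falg_mul_mono {a b c : R} (ha : 0 ≤ a) (h : b ≤ c) : a * b ≤ a * c := by
  have h1 : 0 ≤ a * (c - b) := FAlg.mul_nonneg a (c - b) ha (by rwa [sub_nonneg])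
  have h2 : a * (c - b) = a * c - a * b := by ring
  rw [h2, sub_nonneg] at h1
  exact h1

lemma falg_disj_mul_eq_zero {u v : R} (h : u ⊓ v = 0) : u * v = 0 := by
  have hu : (0 : R) ≤ u := by rw [← h]; exact inf_le_left
  have hv : (0 : R) ≤ v := by rw [← h]; exact inf_le_right
  have s1 : (v * u) ⊓ v = 0 := FAlg.disjoint_mul u v v h hv
  have s1' : v ⊓ (u * v) = 0 := by rwa [mul_comm, inf_comm] at s1
  have s2 : (u * v) ⊓ (u * v) = 0 := FAlg.disjoint_mul v (u * v) u s1' hu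
  rwa [inf_idem] at s2

lemma falg_one_nonneg : (0 : R) ≤ 1 := by
  have hz : (1 : R)⁻ * (1 : R)⁺ = 0 :=
    falg_disj_mul_eq_zero (by rw [inf_comm]; exact posPart_inf_negPart_eq_zero 1)
  have hd : (1 : R)⁺ - (1 : R)⁻ = 1 := posPart_sub_negPart 1
  have key : (1 : R)⁻ = -((1 : R)⁻ * (1 : R)⁻) := by
    calc (1 : R)⁻ = (1 : R)⁻ * ((1 : R)⁺ - (1 : R)⁻) := by rw [hd, mul_one]
    _ = -((1 : R)⁻ * (1 : R)⁻) := by rw [mul_sub, hz, zero_sub]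
  have hnn : 0 ≤ (1 : R)⁻ * (1 : R)⁻ :=
    FAlg.mul_nonneg _ _ (negPart_nonneg 1) (negPart_nonneg 1)
  have hle : (1 : R)⁻ ≤ 0 := by rw [key]; exact neg_nonpos.mpr hnn
  have hzero : (1 : R)⁻ = 0 := le_antisymm hle (negPart_nonneg 1)
  have : (1 : R)⁺ = 1 := by conv_rhs => rw [← hd, hzero, sub_zero]
  rw [← this]; exact posPart_nonneg 1

lemma falg_key {a : R} (ha : 0 ≤ a) (n : ℕ) :
    n • (a - n • (1 : R))⁺ ≤ a * a := by
  set u := (a - n • (1 : R))⁺ with hu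
  set v := (a - n • (1 : R))⁻ with hv
  have huv : u - v = a - n • (1 : R) := posPart_sub_negPart _
  have hdisj : u ⊓ v = 0 := posPart_inf_negPart_eq_zero _
  have hvu : v * u = 0 := falg_disj_mul_eq_zero (by rwa [inf_comm] at hdisj)
  have hun : 0 ≤ u := posPart_nonneg _
  have hrep : n • (1 : R) + u - v = a := by rw [add_sub_assoc, huv]; abel
  have h1 : a * u = n • u + u * u := by
    calc a * u = (n • (1 : R) + u - v) * u := by rw [hrep]
    _ = (n • (1 : R)) * u + u * u - v * u := by ring
    _ = n • u + u * u := by rw [hvu, sub_zero, smul_mul_assoc, one_mul]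
  have h2 : n • u ≤ a * u := by
    rw [h1]; exact le_add_of_nonneg_right (FAlg.mul_nonneg u u hun hun)
  have hone : (0 : R) ≤ n • (1 : R) := riesz_nsmul_nonneg falg_one_nonneg n
  have hua : u ≤ a := by
    calc u = (a - n • (1 : R))⁺ := rfl
    _ ≤ a⁺ := posPart_mono (by simpa using sub_le_self a hone)
    _ = a := posPart_eq_self.mpr ha
  exact h2.trans (falg_mul_mono ha hua)

end AuxFAlg

/-! ### Dual setting lemmas -/

lemma dext {d d' : D} (h : ∀ a : A, P.dual d a = P.dual d' a) : d = d' :=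
  P.dual_inj (LinearMap.ext h)

lemma next {F G : N} (h : ∀ f : D, P.bidual F f = P.bidual G f) : F = G :=
  P.bidual_inj (LinearMap.ext h)

lemma dual_eval_nonneg {d : D} (hd : 0 ≤ d) {a : A} (ha : 0 ≤ a) :
    0 ≤ P.dual d a := (P.dual_order d).mp hd a ha

lemma dle_iff {d d' : D} :
    d ≤ d' ↔ ∀ a : A, 0 ≤ a → P.dual d a ≤ P.dual d' a := by
  rw [← sub_nonneg, P.dual_order]
  simp only [map_sub, LinearMap.sub_apply, sub_nonneg]

lemma nle_iff {F G : N} :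
    F ≤ G ↔ ∀ f : D, 0 ≤ f → P.bidual F f ≤ P.bidual G f := by
  rw [← sub_nonneg, P.bidual_order]
  simp only [map_sub, LinearMap.sub_apply, sub_nonneg]

lemma dual_mono_right {d : D} (hd : 0 ≤ d) {a b : A} (h : a ≤ b) :
    P.dual d a ≤ P.dual d b := by
  have h2 := dual_eval_nonneg (P := P) hd (a := b - a) (by rwa [sub_nonneg])
  rw [map_sub, sub_nonneg] at h2
  exact h2

lemma bidual_eval_nonneg {F : N} (hF : 0 ≤ F) {f : D} (hf : 0 ≤ f) :
    0 ≤ P.bidual F f := (P.bidual_order F).mp hF f hf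

lemma bidual_mono_right {F : N} (hF : 0 ≤ F) {f g : D} (h : f ≤ g) :
    P.bidual F f ≤ P.bidual F g := by
  have h2 := bidual_eval_nonneg (P := P) hF (f := g - f) (by rwa [sub_nonneg])
  rw [map_sub, sub_nonneg] at h2
  exact h2

lemma dsmul_sub_right (a : A) (f g : D) :
    P.dsmul a (f - g) = P.dsmul a f - P.dsmul a g := by
  apply dext (P := P); intro b
  simp only [P.dsmul_eval, map_sub, LinearMap.sub_apply]

lemma dsmul_add_right (a : A) (f g : D) :
    P.dsmul a (f + g) = P.dsmul a f + P.dsmul a g := by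
  apply dext (P := P); intro b
  simp only [P.dsmul_eval, map_add, LinearMap.add_apply]

lemma dsmul_nonneg' {a : A} (ha : 0 ≤ a) {f : D} (hf : 0 ≤ f) :
    0 ≤ P.dsmul a f := by
  rw [P.dual_order]
  intro b hb
  rw [P.dsmul_eval]
  exact dual_eval_nonneg hf (FAlg.mul_nonneg a b ha hb)

lemma act_nonneg {F : N} (hF : 0 ≤ F) {f : D} (hf : 0 ≤ f) :
    0 ≤ P.nsmul F f := by
  rw [P.dual_order]
  intro a ha
  rw [P.nsmul_eval]
  exact bidual_eval_nonneg hF (dsmul_nonneg' ha hf)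

lemma act_add_left (F G : N) (f : D) :
    P.nsmul (F + G) f = P.nsmul F f + P.nsmul G f := by
  apply dext (P := P); intro a
  simp only [P.nsmul_eval, map_add, LinearMap.add_apply]

lemma act_sub_left (F G : N) (f : D) :
    P.nsmul (F - G) f = P.nsmul F f - P.nsmul G f := by
  apply dext (P := P); intro a
  simp only [P.nsmul_eval, map_sub, LinearMap.sub_apply]

lemma act_zero_left (f : D) : P.nsmul (0 : N) f = 0 := by
  apply dext (P := P); intro a
  simp only [P.nsmul_eval, map_zero, LinearMap.zero_apply]

lemma act_add_right (F : N) (f g : D) :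
    P.nsmul F (f + g) = P.nsmul F f + P.nsmul F g := by
  apply dext (P := P); intro a
  simp only [P.nsmul_eval, dsmul_add_right, map_add, LinearMap.add_apply]

lemma act_sub_right (F : N) (f g : D) :
    P.nsmul F (f - g) = P.nsmul F f - P.nsmul F g := by
  apply dext (P := P); intro a
  simp only [P.nsmul_eval, dsmul_sub_right, map_sub, LinearMap.sub_apply]

lemma act_mono_left {F G : N} (h : F ≤ G) {f : D} (hf : 0 ≤ f) :
    P.nsmul F f ≤ P.nsmul G f := by
  rw [← sub_nonneg, ← act_sub_left]
  exact act_nonneg (sub_nonneg.mpr h) hf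

/-- Pointwise infimum property: a downward directed set with infimum `0` has
evaluations at positive elements with infimum `0`. -/
lemma pw_inf (s : Set D) (hne : s.Nonempty) (hdir : DirectedOn (· ≥ ·) s)
    (hglb : IsGLB s 0) {a : A} (ha : 0 ≤ a) {ε : ℝ} (hε : 0 < ε) :
    ∃ d ∈ s, P.dual d a < ε := by
  have hpos : ∀ d ∈ s, (0 : D) ≤ d := fun d hd => hglb.1 hd
  set ev : A → Set ℝ := fun x => (fun d => P.dual d x) '' s with hev
  have hne' : ∀ x : A, (ev x).Nonempty := fun x => hne.image _
  have hbdd : ∀ x : A, 0 ≤ x → BddBelow (ev x) := by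
    intro x hx
    refine ⟨0, ?_⟩
    rintro r ⟨d, hd, rfl⟩
    exact dual_eval_nonneg (hpos d hd) hx
  set μ : A → ℝ := fun x => sInf (ev x) with hμ
  have hμ_le : ∀ {x : A}, 0 ≤ x → ∀ d ∈ s, μ x ≤ P.dual d x := by
    intro x hx d hd
    exact csInf_le (hbdd x hx) ⟨d, hd, rfl⟩
  have hμ_nonneg : ∀ {x : A}, 0 ≤ x → 0 ≤ μ x := by
    intro x hx
    refine le_csInf (hne' x) ?_
    rintro r ⟨d, hd, rfl⟩
    exact dual_eval_nonneg (hpos d hd) hx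
  have hadd : ∀ {x y : A}, 0 ≤ x → 0 ≤ y → μ (x + y) = μ x + μ y := by
    intro x y hx hy
    apply le_antisymm
    · rw [← sub_le_iff_le_add]
      refine le_csInf (hne' x) ?_
      rintro r ⟨d1, hd1, rfl⟩
      rw [sub_le_iff_le_add, ← sub_le_iff_le_add']
      refine le_csInf (hne' y) ?_
      rintro r2 ⟨d2, hd2, rfl⟩
      rw [sub_le_iff_le_add']
      obtain ⟨d, hd, hle1, hle2⟩ := hdir d1 hd1 d2 hd2
      calc μ (x + y) ≤ P.dual d (x + y) := hμ_le (add_nonneg hx hy) d hd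
      _ = P.dual d x + P.dual d y := map_add _ _ _
      _ ≤ P.dual d1 x + P.dual d2 y :=
            add_le_add (dle_iff.mp hle1 x hx) (dle_iff.mp hle2 y hy)
    · refine le_csInf (hne' (x + y)) ?_
      rintro r ⟨d, hd, rfl⟩
      show μ x + μ y ≤ P.dual d (x + y)
      rw [map_add]
      exact add_le_add (hμ_le hx d hd) (hμ_le hy d hd)
  have hμ0 : μ 0 = 0 := by
    refine le_antisymm ?_ (hμ_nonneg le_rfl)
    obtain ⟨d, hd⟩ := hne
    have : μ 0 ≤ P.dual d 0 := hμ_le le_rfl d hd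
    rwa [map_zero] at this
  have hrep : ∀ (x p q : A), 0 ≤ p → 0 ≤ q → x = p - q →
      μ x⁺ - μ x⁻ = μ p - μ q := by
    intro x p q hp hq hx
    have key : x⁺ + q = p + x⁻ :=
      sub_eq_sub_iff_add_eq_add.mp (by rw [posPart_sub_negPart]; exact hx)
    have e1 : μ (x⁺ + q) = μ x⁺ + μ q := hadd (posPart_nonneg x) hq
    have e2 : μ (p + x⁻) = μ p + μ x⁻ := hadd hp (negPart_nonneg x)
    rw [key, e2] at e1
    linarith
  set ψ : A → ℝ := fun x => μ x⁺ - μ x⁻ with hψ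
  have hψ_pos : ∀ {x : A}, 0 ≤ x → ψ x = μ x := by
    intro x hx
    have := hrep x x 0 hx le_rfl (by rw [sub_zero])
    rw [hμ0] at this
    simpa using this
  have hψ_add : ∀ x y : A, ψ (x + y) = ψ x + ψ y := by
    intro x y
    have h1 : x + y = (x⁺ + y⁺) - (x⁻ + y⁻) := by
      conv_lhs => rw [← posPart_sub_negPart x, ← posPart_sub_negPart y]
      abel
    have := hrep (x + y) (x⁺ + y⁺) (x⁻ + y⁻)
      (add_nonneg (posPart_nonneg x) (posPart_nonneg y))
      (add_nonneg (negPart_nonneg x) (negPart_nonneg y)) h1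
    rw [hadd (posPart_nonneg x) (posPart_nonneg y),
       hadd (negPart_nonneg x) (negPart_nonneg y)] at this
    show μ (x+y)⁺ - μ (x+y)⁻ = (μ x⁺ - μ x⁻) + (μ y⁺ - μ y⁻)
    rw [this]; ring
  have hμ_smul : ∀ {r : ℝ}, 0 ≤ r → ∀ {z : A}, 0 ≤ z → μ (r • z) = r * μ z := by
    intro r hr z hz
    have himg : ev (r • z) = r • (ev z) := by
      ext t
      constructor
      · rintro ⟨d, hd, rfl⟩
        refine ⟨P.dual d z, ⟨d, hd, rfl⟩, ?_⟩
        show r • P.dual d z = P.dual d (r • z)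
        exact (map_smul (P.dual d) r z).symm
      · rintro ⟨t', ⟨d, hd, rfl⟩, rfl⟩
        refine ⟨d, hd, ?_⟩
        show P.dual d (r • z) = r • P.dual d z
        exact map_smul (P.dual d) r z
    show sInf (ev (r • z)) = r * sInf (ev z)
    rw [himg, Real.sInf_smul_of_nonneg hr, smul_eq_mul]
  have hψ_smul : ∀ (r : ℝ) (x : A), ψ (r • x) = r * ψ x := by
    intro r x
    rcases le_or_gt 0 r with hr | hr
    · have h1 : r • x = (r • x⁺) - (r • x⁻) := by
        rw [← smul_sub, posPart_sub_negPart]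
      have := hrep (r • x) (r • x⁺) (r • x⁻)
        (RieszSp.smul_nonneg r _ hr (posPart_nonneg x))
        (RieszSp.smul_nonneg r _ hr (negPart_nonneg x)) h1
      show μ (r • x)⁺ - μ (r • x)⁻ = r * (μ x⁺ - μ x⁻)
      rw [this, hμ_smul hr (posPart_nonneg x), hμ_smul hr (negPart_nonneg x)]
      ring
    · have hr' : 0 ≤ -r := by linarith
      have h1 : r • x = ((-r) • x⁻) - ((-r) • x⁺) := by
        rw [← smul_sub, show x⁻ - x⁺ = -x by
          rw [← neg_sub]; rw [posPart_sub_negPart], smul_neg, neg_smul, neg_neg]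
      have := hrep (r • x) ((-r) • x⁻) ((-r) • x⁺)
        (RieszSp.smul_nonneg _ _ hr' (negPart_nonneg x))
        (RieszSp.smul_nonneg _ _ hr' (posPart_nonneg x)) h1
      show μ (r • x)⁺ - μ (r • x)⁻ = r * (μ x⁺ - μ x⁻)
      rw [this, hμ_smul hr' (negPart_nonneg x), hμ_smul hr' (posPart_nonneg x)]
      ring
  set ψl : A →ₗ[ℝ] ℝ :=
    { toFun := ψ
      map_add' := hψ_add
      map_smul' := fun r x => by simpa using hψ_smul r x } with hψl
  have hψbdd : OrderBddFn ψl := by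
    intro lo hi
    obtain ⟨d0, hd0⟩ := hne
    have hd0p : 0 ≤ d0 := hpos d0 hd0
    refine ⟨2 * P.dual d0 (|lo| + |hi|), ?_⟩
    intro x hlo hhi
    have hx1 : x⁺ ≤ |lo| + |hi| := by
      calc x⁺ ≤ hi⁺ := posPart_mono hhi
      _ ≤ |hi| := by
          rw [← posPart_add_negPart hi]
          exact le_add_of_nonneg_right (negPart_nonneg hi)
      _ ≤ |lo| + |hi| := le_add_of_nonneg_left (abs_nonneg lo)
    have hx2 : x⁻ ≤ |lo| + |hi| := by
      calc x⁻ ≤ lo⁻ := negPart_anti hlo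
      _ ≤ |lo| := by
          rw [← posPart_add_negPart lo]
          exact le_add_of_nonneg_left (posPart_nonneg lo)
      _ ≤ |lo| + |hi| := le_add_of_nonneg_right (abs_nonneg hi)
    have e1 : μ x⁺ ≤ P.dual d0 (|lo| + |hi|) :=
      (hμ_le (posPart_nonneg x) d0 hd0).trans (dual_mono_right hd0p hx1)
    have e2 : μ x⁻ ≤ P.dual d0 (|lo| + |hi|) :=
      (hμ_le (negPart_nonneg x) d0 hd0).trans (dual_mono_right hd0p hx2)
    have e3 : 0 ≤ μ x⁺ := hμ_nonneg (posPart_nonneg x)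
    have e4 : 0 ≤ μ x⁻ := hμ_nonneg (negPart_nonneg x)
    have : |ψ x| ≤ 2 * P.dual d0 (|lo| + |hi|) := by
      rw [hψ]
      simp only
      rw [abs_le]
      constructor <;> [skip; skip] <;> nlinarith [e1, e2, e3, e4]
    exact this
  obtain ⟨d1, hd1⟩ := P.dual_surj ψl hψbdd
  have hd1eval : ∀ x : A, P.dual d1 x = ψ x := by
    intro x
    rw [hd1]
    rfl
  have hlb : ∀ d ∈ s, d1 ≤ d := by
    intro d hd
    rw [dle_iff (P := P)]
    intro x hx
    rw [hd1eval, hψ_pos hx]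
    exact hμ_le hx d hd
  have hd1le : d1 ≤ (0 : D) := hglb.2 hlb
  have hμa : μ a ≤ 0 := by
    have h1 : P.dual d1 a = μ a := by rw [hd1eval, hψ_pos ha]
    have h2 : P.dual d1 a ≤ P.dual (0 : D) a := dle_iff.mp hd1le a ha
    rw [h1, map_zero] at h2
    simpa using h2
  have hlt : sInf (ev a) < ε := lt_of_le_of_lt hμa hε
  obtain ⟨r, hrmem, hrlt⟩ := exists_lt_of_csInf_lt (hne' a) hlt
  obtain ⟨d, hd, rfl⟩ := hrmem
  exact ⟨d, hd, hrlt⟩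

/-- Point evaluations at positive elements of `A` belong to `N`. -/
lemma exists_delta {b : A} (hb : 0 ≤ b) :
    ∃ Fb : N, 0 ≤ Fb ∧ ∀ f : D, P.bidual Fb f = P.dual f b := by
  set Φ : D →ₗ[ℝ] ℝ :=
    { toFun := fun f => P.dual f b
      map_add' := fun f g => by
        show P.dual (f + g) b = P.dual f b + P.dual g b
        rw [map_add]; rfl
      map_smul' := fun r f => by
        show P.dual (r • f) b = r • P.dual f b
        rw [map_smul]; rfl } with hΦ
  have hΦeval : ∀ f : D, Φ f = P.dual f b := fun f => rfl
  have hbdd : OrderBddFn Φ := by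
    intro lo hi
    refine ⟨max |P.dual lo b| |P.dual hi b|, ?_⟩
    intro x h1 h2
    have l1 : P.dual lo b ≤ P.dual x b := dle_iff.mp h1 b hb
    have l2 : P.dual x b ≤ P.dual hi b := dle_iff.mp h2 b hb
    rw [hΦeval, abs_le]
    constructor
    · have := neg_abs_le (P.dual lo b)
      have := le_max_left |P.dual lo b| |P.dual hi b|
      linarith
    · have := le_abs_self (P.dual hi b)
      have := le_max_right |P.dual lo b| |P.dual hi b|
      linarith
  have hcont : OrdContFn Φ := by
    intro s hne hdir hglb ε hε
    obtain ⟨d, hd, hlt⟩ := pw_inf (P := P) s hne hdir hglb hb hε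
    refine ⟨d, hd, ?_⟩
    intro d' hd' hle
    have h0 : 0 ≤ P.dual d' b := dual_eval_nonneg (hglb.1 hd') hb
    have h1 : P.dual d' b ≤ P.dual d b := dle_iff.mp hle b hb
    rw [hΦeval, abs_of_nonneg h0]
    exact lt_of_le_of_lt h1 hlt
  obtain ⟨Fb, hFb⟩ := P.bidual_surj Φ hbdd hcont
  have hFbeval : ∀ f : D, P.bidual Fb f = P.dual f b := by
    intro f; rw [hFb]; rfl
  refine ⟨Fb, ?_, hFbeval⟩
  rw [P.bidual_order]
  intro f hf
  rw [hFbeval]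
  exact dual_eval_nonneg hf hb

lemma act_one (f : D) : P.nsmul (1 : N) f = f := by
  obtain ⟨E, hE0, hE⟩ := exists_delta (P := P) (falg_one_nonneg (R := A))
  have hact : ∀ g : D, P.nsmul E g = g := by
    intro g
    apply dext (P := P); intro a
    rw [P.nsmul_eval, hE, P.dsmul_eval, mul_one]
  have hEone : E = 1 := by
    have h1 : ∀ F : N, F * E = F := by
      intro F
      apply next (P := P); intro f
      rw [P.mul_eval, hact]
    exact (one_mul E).symm.trans (h1 1)
  rw [← hEone]
  exact hact f

lemma act_natsmul_one (n : ℕ) (f : D) : P.nsmul ((n • (1 : N))) f = n • f := by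
  induction n with
  | zero => rw [zero_nsmul, zero_nsmul]; exact act_zero_left f
  | succ k ih =>
      rw [succ_nsmul, succ_nsmul, act_add_left, ih, act_one]

/-- The crux: for `0 ≤ F` order continuous, `u ⊓ v = 0` implies `(F ⬝ u) ⊓ v = 0`. -/
lemma crux {u v : D} (huv : u ⊓ v = 0) {F : N} (hF : 0 ≤ F) :
    (P.nsmul F u) ⊓ v = 0 := by
  have hu : (0 : D) ≤ u := by rw [← huv]; exact inf_le_left
  have hv : (0 : D) ≤ v := by rw [← huv]; exact inf_le_right
  set w := (P.nsmul F u) ⊓ v with hw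
  have hw0 : (0 : D) ≤ w := le_inf (act_nonneg hF hu) hv
  have key : ∀ n : ℕ, ∀ a : A, 0 ≤ a →
      (n : ℝ) * P.dual w a ≤ P.bidual (F * F) (P.dsmul a u) := by
    intro n a ha
    set G := (F - n • (1 : N))⁺ with hG
    have hG0 : (0 : N) ≤ G := posPart_nonneg _
    have hFle : F ≤ n • (1 : N) + G := by
      have h := le_posPart (F - n • (1 : N))
      rw [← hG] at h
      have := sub_le_iff_le_add.mp h
      rwa [add_comm] at this
    have h1 : P.nsmul F u ≤ n • u + P.nsmul G u := by
      calc P.nsmul F u ≤ P.nsmul (n • (1 : N) + G) u := act_mono_left hFle hu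
      _ = P.nsmul (n • (1 : N)) u + P.nsmul G u := act_add_left _ _ _
      _ = n • u + P.nsmul G u := by rw [act_natsmul_one]
    have hGu : (0 : D) ≤ P.nsmul G u := act_nonneg hG0 hu
    have hnu : (0 : D) ≤ n • u := riesz_nsmul_nonneg hu n
    have h2 : w ≤ P.nsmul G u := by
      calc w ≤ (n • u + P.nsmul G u) ⊓ v := inf_le_inf_right v h1
      _ ≤ (n • u) ⊓ v + (P.nsmul G u) ⊓ v := riesz_inf_add_le hnu hGu hv
      _ = (P.nsmul G u) ⊓ v := by rw [riesz_nsmul_inf_eq_zero huv n, zero_add]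
      _ ≤ P.nsmul G u := inf_le_left
    have h3 : P.dual w a ≤ P.bidual G (P.dsmul a u) := by
      have h3' := (dle_iff (P := P)).mp h2 a ha
      rwa [P.nsmul_eval] at h3'
    have hkey : n • G ≤ F * F := falg_key hF n
    have hz : (0 : D) ≤ P.dsmul a u := dsmul_nonneg' ha hu
    have h4 : (n : ℝ) * P.bidual G (P.dsmul a u) ≤ P.bidual (F * F) (P.dsmul a u) := by
      have h6 : P.bidual ((n : ℝ) • G) (P.dsmul a u) ≤ P.bidual (F * F) (P.dsmul a u) := by
        rw [Nat.cast_smul_eq_nsmul]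
        exact nle_iff.mp hkey _ hz
      rw [map_smul] at h6
      rw [LinearMap.smul_apply, smul_eq_mul] at h6
      exact h6
    calc (n : ℝ) * P.dual w a ≤ (n : ℝ) * P.bidual G (P.dsmul a u) :=
          mul_le_mul_of_nonneg_left h3 (Nat.cast_nonneg n)
    _ ≤ P.bidual (F * F) (P.dsmul a u) := h4
  have hzero : ∀ a : A, 0 ≤ a → P.dual w a = 0 := by
    intro a ha
    have h0 : 0 ≤ P.dual w a := dual_eval_nonneg hw0 ha
    refine le_antisymm ?_ h0
    by_contra hcon
    push_neg at hcon
    set C := P.bidual (F * F) (P.dsmul a u) with hC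
    obtain ⟨n, hn⟩ := exists_nat_gt (C / P.dual w a)
    have hlt : C < (n : ℝ) * P.dual w a := (div_lt_iff₀ hcon).mp hn
    exact absurd (key n a ha) (not_le.mpr hlt)
  apply dext (P := P); intro a
  have hsplit : P.dual w a = P.dual w a⁺ - P.dual w a⁻ := by
    conv_lhs => rw [← posPart_sub_negPart a]
    rw [map_sub]
  rw [hsplit, hzero _ (posPart_nonneg a), hzero _ (negPart_nonneg a), sub_zero,
    map_zero]
  rfl

lemma crux2 {u v : D} (huv : u ⊓ v = 0) {F : N} (hF : 0 ≤ F) :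
    (P.nsmul F u) ⊓ (P.nsmul F v) = 0 := by
  have h1 := crux (P := P) huv hF
  have h2 : v ⊓ (P.nsmul F u) = 0 := by rwa [inf_comm] at h1
  have h3 := crux (P := P) h2 hF
  rwa [inf_comm] at h3

lemma part1 {F : N} (hF : 0 ≤ F) (h1 h2 : D) :
    P.nsmul F (h1 ⊓ h2) = P.nsmul F h1 ⊓ P.nsmul F h2 := by
  set h := h1 ⊓ h2 with hh
  have hu : (h1 - h) ⊓ (h2 - h) = 0 := by
    rw [← inf_sub, ← hh, sub_self]
  have e1 : P.nsmul F h1 = P.nsmul F (h1 - h) + P.nsmul F h := by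
    rw [← act_add_right, sub_add_cancel]
  have e2 : P.nsmul F h2 = P.nsmul F (h2 - h) + P.nsmul F h := by
    rw [← act_add_right, sub_add_cancel]
  rw [e1, e2, ← inf_add, crux2 hu hF, zero_add]

lemma act_abs {F : N} (hF : 0 ≤ F) (f : D) :
    |P.nsmul F f| = P.nsmul F |f| := by
  have hd : f⁺ ⊓ f⁻ = 0 := posPart_inf_negPart_eq_zero f
  have h1 : P.nsmul F f = P.nsmul F f⁺ - P.nsmul F f⁻ := by
    rw [← act_sub_right, posPart_sub_negPart]
  have hdisj : (P.nsmul F f⁺) ⊓ (P.nsmul F f⁻) = 0 := crux2 hd hF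
  have hp : (0 : D) ≤ P.nsmul F f⁺ := act_nonneg hF (posPart_nonneg f)
  have hq : (0 : D) ≤ P.nsmul F f⁻ := act_nonneg hF (negPart_nonneg f)
  rw [h1, riesz_abs_of_disj hp hq hdisj, ← act_add_right, posPart_add_negPart]

/-- For `0 ≤ F`, `F ⋅ (|f| ⊓ |g|) = (F ⋅ |f|) ⊓ (F ⋅ |g|)`; consequently, with the
factorization property, if `F ⋅ f ⊥ F ⋅ g` for all `F ≥ 0` then `f ⊥ g`. -/
theorem stmt18 (hfact : ∀ a : A, ∃ b c : A, a = b * c) :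
    (∀ F : N, 0 ≤ F → ∀ f g : D,
      P.nsmul F (|f| ⊓ |g|) = P.nsmul F |f| ⊓ P.nsmul F |g|) ∧
    (∀ f g : D, (∀ F : N, 0 ≤ F → |P.nsmul F f| ⊓ |P.nsmul F g| = 0) →
      |f| ⊓ |g| = 0) := by
  constructor
  · intro F hF f g
    exact part1 hF |f| |g|
  · intro f g hyp
    set h := |f| ⊓ |g| with hh
    have key : ∀ F : N, 0 ≤ F → P.nsmul F h = 0 := by
      intro F hF
      rw [hh, part1 hF |f| |g|, ← act_abs hF f, ← act_abs hF g]
      exact hyp F hF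
    have heval : ∀ a : A, P.dual h a = 0 := by
      have hb : ∀ b : A, 0 ≤ b → ∀ c : A, P.dual h (b * c) = 0 := by
        intro b hb c
        obtain ⟨Fb, hFb0, hFb⟩ := exists_delta (P := P) hb
        have hact : P.nsmul Fb h = P.dsmul b h := by
          apply dext (P := P); intro x
          rw [P.nsmul_eval, hFb, P.dsmul_eval, P.dsmul_eval, mul_comm]
        have h0 : P.dsmul b h = 0 := by rw [← hact, key Fb hFb0]
        have h1 : P.dual (P.dsmul b h) c = 0 := by rw [h0, map_zero]; rfl
        rwa [P.dsmul_eval] at h1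
      intro a
      obtain ⟨p, q, hpq⟩ := hfact a
      have hsplit : P.dual h a = P.dual h (p⁺ * q) - P.dual h (p⁻ * q) := by
        rw [← map_sub]
        congr 1
        rw [hpq]
        conv_lhs => rw [← posPart_sub_negPart p]
        rw [sub_mul]
      rw [hsplit, hb _ (posPart_nonneg p) q, hb _ (negPart_nonneg p) q, sub_zero]
    apply dext (P := P); intro a
    rw [heval a, map_zero]
    rfl
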